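/- arXiv:2101.07859 — 5 statements merged into one kernel-verified Lean document; each statement's English description precedes it below -/
import Mathlib

section
/- In a connected finite simple graph, any two longest paths share at least one common vertex. -/
/-!
If two longest paths `p` and `q` were vertex-disjoint, connectivity would give a path `r` from a
vertex `x` of `p` to a vertex `y` of `q` meeting `p` only in `x` and `q` only in `y`. The longer
piece of `p` at `x`, then `r`, then the longer piece of `q` at `y` form a path of length at least
`|p| / 2 + 1 + |q| / 2`, which exceeds the length of a longest path.
-/

open SimpleGraph

/-- `p` is a longest path in `G`: it is a path and no path in `G` is longer. -/
def IsLongestPath {V : Type} (G : SimpleGraph V) {u v : V} (p : G.Walk u v) : Prop :=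
  p.IsPath ∧ ∀ ⦃a b : V⦄ (q : G.Walk a b), q.IsPath → q.length ≤ p.length

namespace SimpleGraph.Walk

variable {V : Type} {G : SimpleGraph V}

theorem IsPath.append {u v w : V} {p : G.Walk u v} {q : G.Walk v w} (hp : p.IsPath)
    (hq : q.IsPath) (h : ∀ z ∈ p.support, z ∈ q.support → z = v) : (p.append q).IsPath := by
  rw [isPath_def, support_append, List.nodup_append]
  have hq' := hq.support_nodup
  rw [← cons_tail_support, List.nodup_cons] at hq'
  refine ⟨hp.support_nodup, hq'.2, fun z hz z' hz' hzz => hq'.1 ?_⟩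
  subst hzz
  rwa [h z hz (List.mem_of_mem_tail hz')] at hz'

theorem exists_walk_to_first_mem (S : Set V) {a b : V} (w : G.Walk a b) (hb : b ∈ S) :
    ∃ y ∈ S, ∃ t : G.Walk a y, t.support ⊆ w.support ∧ ∀ z ∈ t.support, z ∈ S → z = y := by
  induction w with
  | nil => exact ⟨_, hb, nil, List.Subset.refl _, by simp⟩
  | @cons a _ _ hadj w ih =>
    by_cases ha : a ∈ S
    · exact ⟨a, ha, nil, by simp, by simp⟩
    · obtain ⟨y, hy, t, hsub, hfirst⟩ := ih hb
      refine ⟨y, hy, cons hadj t, by simpa using List.cons_subset_cons a hsub, ?_⟩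
      simp only [support_cons, List.mem_cons, forall_eq_or_imp]
      exact ⟨fun h => absurd h ha, hfirst⟩

theorem exists_isPath_meeting_sets_only_at_ends (S T : Set V) {a b : V} (ha : a ∈ S)
    (hb : b ∈ T) (w : G.Walk a b) :
    ∃ x ∈ S, ∃ y ∈ T, ∃ r : G.Walk x y, r.IsPath ∧
      (∀ z ∈ r.support, z ∈ S → z = x) ∧ (∀ z ∈ r.support, z ∈ T → z = y) := by
  classical
  obtain ⟨y, hy, t, -, htT⟩ := exists_walk_to_first_mem T w hb
  obtain ⟨x, hx, s, hst, hsS⟩ := exists_walk_to_first_mem S t.reverse ha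
  have hrs : ∀ z ∈ s.reverse.bypass.support, z ∈ s.support := fun z hz => by
    simpa using support_bypass_subset_support _ hz
  refine ⟨x, hx, y, hy, s.reverse.bypass, s.reverse.bypass_isPath,
    fun z hz => hsS z (hrs z hz), fun z hz => htT z ?_⟩
  simpa using hst (hrs z hz)

theorem IsPath.exists_isPath_to_two_mul_length_ge {u v x : V} {p : G.Walk u v}
    (hp : p.IsPath) (hx : x ∈ p.support) :
    ∃ a, ∃ w : G.Walk a x, w.IsPath ∧ w.support ⊆ p.support ∧ p.length ≤ 2 * w.length := by
  classical
  have hlen := congrArg length (p.take_spec hx)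
  rw [length_append] at hlen
  rcases le_total (p.dropUntil x hx).length (p.takeUntil x hx).length with h | h
  · exact ⟨u, _, hp.takeUntil hx, p.support_takeUntil_subset_support hx, by omega⟩
  · refine ⟨v, (p.dropUntil x hx).reverse, (hp.dropUntil hx).reverse, ?_, ?_⟩
    · simpa using p.support_dropUntil_subset_support hx
    · rw [length_reverse]; omega

theorem exists_isPath_two_mul_length_gt_of_disjoint {u v c d : V} (hG : G.Connected)
    {p : G.Walk u v} {q : G.Walk c d} (hp : p.IsPath) (hq : q.IsPath)
    (hpq : p.support.Disjoint q.support) :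
    ∃ (a b : V) (s : G.Walk a b), s.IsPath ∧ p.length + q.length < 2 * s.length := by
  obtain ⟨x, hx, y, hy, r, hr, hrp, hrq⟩ :=
    exists_isPath_meeting_sets_only_at_ends {z | z ∈ p.support} {z | z ∈ q.support}
      p.start_mem_support q.start_mem_support (hG.preconnected u c).some
  obtain ⟨a, pa, hpa, hpap, hplen⟩ := hp.exists_isPath_to_two_mul_length_ge hx
  obtain ⟨b, qb, hqb, hqbq, hqlen⟩ := hq.exists_isPath_to_two_mul_length_ge hy
  have hr_pos : 0 < r.length := by
    by_contra! h
    exact hpq hx (eq_of_length_eq_zero (Nat.le_zero.mp h) ▸ hy)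
  have hrqb : (r.append qb.reverse).IsPath :=
    hr.append hqb.reverse fun z hz hz' => hrq z hz (hqbq (by simpa using hz'))
  refine ⟨a, b, pa.append (r.append qb.reverse), hpa.append hrqb fun z hz hz' => ?_, ?_⟩
  · rcases (mem_support_append_iff _ _).mp hz' with hzr | hzq
    · exact hrp z hzr (hpap hz)
    · exact absurd (hqbq (by simpa using hzq)) (hpq (hpap hz))
  · simp only [length_append, length_reverse]
    omega

end SimpleGraph.Walk

theorem two_longest_paths_intersect_general {V : Type} (G : SimpleGraph V)
    (hG : G.Connected) {u v c d : V} (p : G.Walk u v) (q : G.Walk c d)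
    (hp : IsLongestPath G p) (hq : IsLongestPath G q) :
    ∃ x, x ∈ p.support ∧ x ∈ q.support := by
  by_contra hdisj
  obtain ⟨a, b, s, hs, hlen⟩ := Walk.exists_isPath_two_mul_length_gt_of_disjoint hG hp.1 hq.1
    fun x hxp hxq => hdisj ⟨x, hxp, hxq⟩
  have := hp.2 s hs
  have := hq.2 s hs
  omega

/-- In a connected finite simple graph, any two longest paths share at least one
common vertex. -/
theorem two_longest_paths_intersect {V : Type} [Fintype V] (G : SimpleGraph V)
    (hG : G.Connected) {u v c d : V} (p : G.Walk u v) (q : G.Walk c d)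
    (hp : IsLongestPath G p) (hq : IsLongestPath G q) :
    ∃ x, x ∈ p.support ∧ x ∈ q.support :=
  two_longest_paths_intersect_general G hG p q hp hq
end

section
/- Let P and Q be longest paths in a finite simple graph G with V(P) ∩ V(Q) = {a_1,…,a_ℓ} (ℓ ≥ 1), and write P = P_0 + P_1 + ⋯ + P_ℓ and Q = Q_0 + Q_1 + ⋯ + Q_ℓ as concatenations of segments at the intersection vertices. Then there is no path R in G, internally disjoint from V(P) ∪ V(Q), joining an internal vertex of the extremal segment P_0 (excluding intersection vertices) to an internal vertex of an extremal segment Q_0 or Q_ℓ (excluding intersection vertices). -/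
/-!
Since `x` precedes every common vertex along `p`, the part of `p` up to `x` misses `q`; likewise
the part of `q` from one of its ends up to `y` misses `p` (for `Q_ℓ`, read `q` backwards).
Exchanging tails through `r` gives two paths, `p` up to `x` then `r` then the rest of `q`, and the
first part of `q` then `r` reversed then the rest of `p`. Their lengths add up to
`|p| + |q| + 2|r|`, so maximality of `p` and `q` forces `|r| = 0`, i.e. `x = y`, although `x ∉ q`.
-/

open SimpleGraph

namespace SimpleGraph.Walk

variable {V : Type} {G : SimpleGraph V}

theorem IsPath.append_of_support_inter {a b c : V} {w₁ : G.Walk a b} {w₂ : G.Walk b c}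
    (h₁ : w₁.IsPath) (h₂ : w₂.IsPath) (h : ∀ z ∈ w₁.support, z ∈ w₂.support → z = b) :
    (w₁.append w₂).IsPath := by
  rw [isPath_def, support_append]
  have hb : b ∉ w₂.support.tail := by
    have hnd := h₂.support_nodup
    rw [← w₂.cons_tail_support] at hnd
    exact (List.nodup_cons.1 hnd).1
  refine h₁.support_nodup.append (h₂.support_nodup.sublist (List.tail_sublist _)) ?_
  intro z hz₁ hz₂
  exact hb (h z hz₁ (List.mem_of_mem_tail hz₂) ▸ hz₂)

theorem IsPath.append_append_of_disjoint {u x y d : V} {p : G.Walk u x} {r : G.Walk x y}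
    {q : G.Walk y d} (hp : p.IsPath) (hr : r.IsPath) (hq : q.IsPath)
    (hpq : p.support.Disjoint q.support) (hrp : ∀ z ∈ r.support, z ∈ p.support → z = x)
    (hrq : ∀ z ∈ r.support, z ∈ q.support → z = y) : ((p.append r).append q).IsPath := by
  refine (hp.append_of_support_inter hr fun z hzp hzr => hrp z hzr hzp).append_of_support_inter
    hq fun z hz hzq => ?_
  rcases (mem_support_append_iff _ _).1 hz with hzp | hzr
  · exact (hpq hzp hzq).elim
  · exact hrq z hzr hzq

variable [DecidableEq V]

theorem mem_support_takeUntil_iff_idxOf_le {u v x z : V} (p : G.Walk u v) (hx : x ∈ p.support)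
    (hz : z ∈ p.support) :
    z ∈ (p.takeUntil x hx).support ↔ p.support.idxOf z ≤ p.support.idxOf x := by
  rw [takeUntil_eq_take, support_copy, support_take, List.mem_take_iff_idxOf_lt hz,
    Nat.lt_succ_iff]

theorem disjoint_support_takeUntil_of_idxOf_lt {u v x : V} (p : G.Walk u v) (hx : x ∈ p.support)
    {s : List V} (h : ∀ z ∈ p.support, z ∈ s → p.support.idxOf x < p.support.idxOf z) :
    (p.takeUntil x hx).support.Disjoint s := fun z hz hzs => by
  have hzp := p.support_takeUntil_subset_support hx hz
  have := (p.mem_support_takeUntil_iff_idxOf_le hx hzp).1 hz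
  have := h z hzp hzs
  omega

theorem IsPath.disjoint_support_dropUntil_of_idxOf_lt {u v x : V} {p : G.Walk u v}
    (hp : p.IsPath) (hx : x ∈ p.support) {s : List V}
    (h : ∀ z ∈ p.support, z ∈ s → p.support.idxOf z < p.support.idxOf x) :
    (p.dropUntil x hx).support.Disjoint s := fun z hz hzs => by
  have hzp := p.support_dropUntil_subset_support hx hz
  rcases eq_or_ne z x with rfl | hzx
  · exact (h z hzp hzs).false
  have hzt : z ∉ (p.takeUntil x hx).support := fun hzt =>
    ((p.take_spec hx).symm ▸ hp).ne_of_mem_support_of_append hzx hzt hz rfl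
  rw [mem_support_takeUntil_iff_idxOf_le p hx hzp] at hzt
  have := h z hzp hzs
  omega

end SimpleGraph.Walk

theorem IsLongestPath.reverse {V : Type} {G : SimpleGraph V} {u v : V} {p : G.Walk u v}
    (hp : IsLongestPath G p) : IsLongestPath G p.reverse :=
  ⟨hp.1.reverse, by simpa only [Walk.length_reverse] using hp.2⟩

theorem IsLongestPath.length_eq_zero_of_bridge {V : Type} {G : SimpleGraph V} {u v c d x y : V}
    {p₁ : G.Walk u x} {p₂ : G.Walk x v} {q₁ : G.Walk c y} {q₂ : G.Walk y d} {r : G.Walk x y}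
    (hp : IsLongestPath G (p₁.append p₂)) (hq : IsLongestPath G (q₁.append q₂))
    (hr : r.IsPath) (hpq : p₁.support.Disjoint q₂.support) (hqp : q₁.support.Disjoint p₂.support)
    (hrp : ∀ z ∈ r.support, z ∈ (p₁.append p₂).support → z = x)
    (hrq : ∀ z ∈ r.support, z ∈ (q₁.append q₂).support → z = y) : r.length = 0 := by
  simp only [Walk.mem_support_append_iff] at hrp hrq
  have hA : ((p₁.append r).append q₂).IsPath :=
    hp.1.of_append_left.append_append_of_disjoint hr hq.1.of_append_right hpq
      (fun z hz hzp => hrp z hz (.inl hzp)) (fun z hz hzq => hrq z hz (.inr hzq))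
  have hB : ((q₁.append r.reverse).append p₂).IsPath :=
    hq.1.of_append_left.append_append_of_disjoint hr.reverse hp.1.of_append_right hqp
      (fun z hz hzq => hrq z (by simpa using hz) (.inl hzq))
      (fun z hz hzp => hrp z (by simpa using hz) (.inr hzp))
  have hA' := hp.2 _ hA
  have hB' := hq.2 _ hB
  simp only [Walk.length_append, Walk.length_reverse] at hA' hB'
  omega

theorem no_connection_between_extremal_segments_general {V : Type} [DecidableEq V]
    (G : SimpleGraph V) {u v c d x y : V}
    (p : G.Walk u v) (q : G.Walk c d)
    (hp : IsLongestPath G p) (hq : IsLongestPath G q)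
    (hx : x ∈ p.support)
    (hxfirst : ∀ z ∈ p.support, z ∈ q.support →
      p.support.idxOf x < p.support.idxOf z)
    (hy : y ∈ q.support)
    (hyext : (∀ z ∈ q.support, z ∈ p.support →
        q.support.idxOf y < q.support.idxOf z) ∨
      (∀ z ∈ q.support, z ∈ p.support →
        q.support.idxOf z < q.support.idxOf y))
    (r : G.Walk x y) (hr : r.IsPath)
    (hint : ∀ z ∈ r.support, z ≠ x → z ≠ y → z ∉ p.support ∧ z ∉ q.support) :
    False := by
  have hxq : x ∉ q.support := fun h => (hxfirst x hx h).false
  have hyp : y ∉ p.support := fun h => by rcases hyext with h' | h' <;> exact (h' y hy h).false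
  have hrp : ∀ z ∈ r.support, z ∈ p.support → z = x := fun z hz hzp =>
    by_contra fun hzx => (hint z hz hzx (ne_of_mem_of_not_mem hzp hyp)).1 hzp
  have hrq : ∀ z ∈ r.support, z ∈ q.support → z = y := fun z hz hzq =>
    by_contra fun hzy => (hint z hz (ne_of_mem_of_not_mem hzq hxq) hzy).2 hzq
  have hP₀ := p.disjoint_support_takeUntil_of_idxOf_lt hx hxfirst
  suffices r.length = 0 from hxq (Walk.eq_of_length_eq_zero this ▸ hy)
  have hp' : IsLongestPath G ((p.takeUntil x hx).append (p.dropUntil x hx)) := by rwa [Walk.take_spec]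
  rcases hyext with hQ₀ | hQℓ
  · exact hp'.length_eq_zero_of_bridge (q₁ := q.takeUntil y hy) (q₂ := q.dropUntil y hy)
      (by rwa [Walk.take_spec]) hr
      (List.disjoint_of_subset_right (q.support_dropUntil_subset_support hy) hP₀)
      (List.disjoint_of_subset_right (p.support_dropUntil_subset_support hx)
        (q.disjoint_support_takeUntil_of_idxOf_lt hy hQ₀))
      (by rwa [Walk.take_spec]) (by rwa [Walk.take_spec])
  · have hqrev : (q.dropUntil y hy).reverse.append (q.takeUntil y hy).reverse = q.reverse := by
      rw [← Walk.reverse_append, Walk.take_spec]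
    refine hp'.length_eq_zero_of_bridge (hqrev ▸ hq.reverse) hr ?_ ?_ (by rwa [Walk.take_spec]) ?_
    · rw [Walk.support_reverse, List.disjoint_reverse_right]
      exact List.disjoint_of_subset_right (q.support_takeUntil_subset_support hy) hP₀
    · rw [Walk.support_reverse, List.disjoint_reverse_left]
      exact List.disjoint_of_subset_right (p.support_dropUntil_subset_support hx)
        (hq.1.disjoint_support_dropUntil_of_idxOf_lt hy hQℓ)
    · rw [hqrev, Walk.support_reverse]
      simpa only [List.mem_reverse] using hrq

/-- Let `P`, `Q` be longest paths with nonempty vertex intersection.  There is no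
path `R`, internally disjoint from `V(P) ∪ V(Q)`, joining an internal vertex `x` of
the extremal segment `P₀` of `P` (a vertex of `P` occurring strictly before every
intersection vertex along `P`) to an internal vertex `y` of an extremal segment
`Q₀` or `Q_ℓ` of `Q` (a vertex of `Q` occurring strictly before, or strictly after,
every intersection vertex along `Q`). -/
theorem no_connection_between_extremal_segments {V : Type} [Fintype V] [DecidableEq V]
    (G : SimpleGraph V) {u v c d x y : V}
    (p : G.Walk u v) (q : G.Walk c d)
    (hp : IsLongestPath G p) (hq : IsLongestPath G q)
    (hinter : ∃ z, z ∈ p.support ∧ z ∈ q.support)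
    (hx : x ∈ p.support)
    (hxfirst : ∀ z ∈ p.support, z ∈ q.support →
      p.support.idxOf x < p.support.idxOf z)
    (hy : y ∈ q.support)
    (hyext : (∀ z ∈ q.support, z ∈ p.support →
        q.support.idxOf y < q.support.idxOf z) ∨
      (∀ z ∈ q.support, z ∈ p.support →
        q.support.idxOf z < q.support.idxOf y))
    (r : G.Walk x y) (hr : r.IsPath)
    (hint : ∀ z ∈ r.support, z ≠ x → z ≠ y → z ∉ p.support ∧ z ∉ q.support) :
    False :=
  no_connection_between_extremal_segments_general G p q hp hq hx hxfirst hy hyext r hr hint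
end

section
/- Let P, Q, R be three longest paths in a finite simple graph G. Suppose V(P) ∩ V(Q) ∩ V(R) = ∅ and R meets both V(P) \ V(Q) and V(Q) \ V(P) via exactly one subpath R_2 of R that goes directly from a vertex a ∈ V(P) to a vertex b ∈ V(Q) with all internal vertices outside V(P) ∪ V(Q), and no other subpath of R connects P to Q. Write R = R_1 + R_2 + R_3 (split at a and b) and Q = Q_1 + Q_2 (split at b), with L(R_1) ≥ L(R_3) and L(Q_1) ≥ L(Q_2). Then the path R_1 + R_2 + Q_1 has length strictly greater than L(R), a contradiction; hence such a configuration is impossible. -/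
open SimpleGraph

private lemma append_isPath {V : Type} {G : SimpleGraph V} {u v w : V}
    {p : G.Walk u v} {q : G.Walk v w} (hp : p.IsPath) (hq : q.IsPath)
    (h : ∀ x ∈ p.support, x ∈ q.support → x = v) : (p.append q).IsPath := by
  rw [Walk.isPath_def, Walk.support_append, List.nodup_append]
  refine ⟨hp.support_nodup, hq.support_nodup.tail, ?_⟩
  intro x hx y hx' hxy
  subst hxy
  have hxq : x ∈ q.support := by
    rw [Walk.support_eq_cons] at *
    exact List.mem_cons_of_mem _ hx'
  have hxv := h x hx hxq
  subst hxv
  have := hq.support_nodup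
  rw [Walk.support_eq_cons] at this
  exact (List.nodup_cons.mp this).1 hx'

private lemma junction_of_isPath {V : Type} {G : SimpleGraph V} {u v w : V}
    {p : G.Walk u v} {q : G.Walk v w} (h : (p.append q).IsPath) :
    ∀ x ∈ p.support, x ∈ q.support → x = v := by
  intro x hx hxq
  by_contra hxv
  rw [Walk.isPath_def, Walk.support_append, List.nodup_append] at h
  refine h.2.2 x hx x ?_ rfl
  rw [Walk.support_eq_cons] at hxq
  rcases List.mem_cons.mp hxq with h' | h'
  · exact absurd h' hxv
  · exact h'

/-- Suppose `P`, `Q = Q₁ + Q₂` (split at `b`) and `R = R₁ + R₂ + R₃` (split at `a`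
and `b`) are longest paths with empty triple intersection, where `R₂` goes directly
from `a ∈ V(P) \ V(Q)` to `b ∈ V(Q) \ V(P)` with all internal vertices outside
`V(P) ∪ V(Q)`, `R₁` avoids `V(Q)` and `R₃` avoids `V(P)` (so `R₂` is the only
subpath of `R` connecting `P` to `Q`), and `L(R₁) ≥ L(R₃)`, `L(Q₁) ≥ L(Q₂)`.
Then the path `R₁ + R₂ + Q₁` would be strictly longer than `L(R)`: such a
configuration is impossible. -/
theorem single_connector_configuration_impossible {V : Type} [Fintype V]
    (G : SimpleGraph V) {up vp uq vq ur vr a b : V}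
    (p : G.Walk up vp)
    (q1 : G.Walk uq b) (q2 : G.Walk b vq)
    (r1 : G.Walk ur a) (r2 : G.Walk a b) (r3 : G.Walk b vr)
    (hp : IsLongestPath G p)
    (hq : IsLongestPath G (q1.append q2))
    (hr : IsLongestPath G ((r1.append r2).append r3))
    (hEmpty : ¬ ∃ x, x ∈ p.support ∧ x ∈ (q1.append q2).support ∧
      x ∈ ((r1.append r2).append r3).support)
    (ha : a ∈ p.support) (haq : a ∉ (q1.append q2).support)
    (hb : b ∈ (q1.append q2).support) (hbp : b ∉ p.support)
    (hint : ∀ z ∈ r2.support, z ≠ a → z ≠ b →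
      z ∉ p.support ∧ z ∉ (q1.append q2).support)
    (hr1q : ∀ z ∈ r1.support, z ∉ (q1.append q2).support)
    (hr3p : ∀ z ∈ r3.support, z ∉ p.support)
    (hlenR : r3.length ≤ r1.length)
    (hlenQ : q2.length ≤ q1.length) :
    False := by
  have hR : ((r1.append r2).append r3).IsPath := hr.1
  have hr12 : (r1.append r2).IsPath := hR.of_append_left
  have hr1 : r1.IsPath := hr12.of_append_left
  have hr2 : r2.IsPath := hr12.of_append_right
  have hq1 : q1.IsPath := hq.1.of_append_left
  have hq1sub : ∀ x ∈ q1.support, x ∈ (q1.append q2).support := by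
    intro x hx; rw [Walk.mem_support_append_iff]; exact Or.inl hx
  -- path r2 ++ q1.reverse
  have hW2 : (r2.append q1.reverse).IsPath := by
    refine append_isPath hr2 hq1.reverse ?_
    intro x hx hx'
    rw [Walk.support_reverse, List.mem_reverse] at hx'
    by_contra hxb
    by_cases hxa : x = a
    · subst hxa; exact haq (hq1sub x hx')
    · exact (hint x hx hxa hxb).2 (hq1sub x hx')
  -- the big path W = r1 ++ (r2 ++ q1.reverse)
  have hW : (r1.append (r2.append q1.reverse)).IsPath := by
    refine append_isPath hr1 hW2 ?_
    intro x hx hx'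
    rw [Walk.mem_support_append_iff] at hx'
    rcases hx' with hx' | hx'
    · exact junction_of_isPath hr12 x hx hx'
    · rw [Walk.support_reverse, List.mem_reverse] at hx'
      exact absurd (hq1sub x hx') (hr1q x hx)
  -- lengths
  have hWle := hr.2 _ hW
  have hQle := hr.2 _ hq.1
  have hRle := hq.2 _ hr.1
  simp only [Walk.length_append, Walk.length_reverse] at hWle hQle hRle
  have hr2pos : 1 ≤ r2.length := by
    rcases Nat.eq_zero_or_pos r2.length with h0 | h
    · exact absurd (Walk.eq_of_length_eq_zero h0 ▸ hb) haq
    · exact h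
  omega
end

section
/- Let G be an (ℓ+1)-connected finite simple graph and let P, Q be longest paths with |V(P) ∩ V(Q)| = ℓ. Orient P and Q and let a_1 (resp. b_1) be the first vertex of V(P) ∩ V(Q) along P (resp. Q). If a_1 = b_1, then the initial segment of P before a_1 and the initial segment of Q before b_1 are both nonempty, i.e., a_1 is not a common endpoint of both P and Q. -/
open SimpleGraph

/-- `G` is `k`-connected: it has more than `k` vertices and deleting any set of
fewer than `k` vertices leaves a connected graph. -/
def KConnected {V : Type} [Fintype V] (G : SimpleGraph V) (k : ℕ) : Prop :=
  k < Fintype.card V ∧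
    ∀ S : Finset V, S.card < k → (G.induce {x | x ∉ S}).Connected

/-! A longest path cannot be extended at its start, so every neighbour of its first vertex lies
on it, and any path ending at its first vertex and otherwise disjoint from it is trivial. Applied
to the prefix of `Q` up to `a₁`, which meets `P` only in `a₁` because `a₁` is the first common
vertex along `Q`, this shows that if `a₁` starts `P` then it also starts `Q`, and vice versa. But
if `a₁` starts both, `(ℓ+1)`-connectivity gives a neighbour of `a₁` outside the `ℓ` common
vertices, hence missing from `P` or from `Q`, which contradicts the first remark. -/

variable {V : Type} {G : SimpleGraph V}

lemma KConnected.exists_adj_notMem [Fintype V] [DecidableEq V] {k : ℕ} (hG : KConnected G k)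
    {T : Finset V} (hT : T.card ≤ k) {a : V} (ha : a ∈ T) : ∃ t, G.Adj a t ∧ t ∉ T := by
  obtain ⟨b, -, hb⟩ := Finset.exists_mem_notMem_of_card_lt_card
    (hT.trans_lt (hG.1.trans_eq Finset.card_univ.symm))
  have hconn := hG.2 (T.erase a) (by have := Finset.card_erase_lt_of_mem ha; omega)
  have hba : b ≠ a := by rintro rfl; exact hb ha
  obtain ⟨⟨t, ht⟩, hadj'⟩ := (hconn.preconnected ⟨a, Finset.notMem_erase a T⟩
    ⟨b, fun h => hb (Finset.mem_of_mem_erase h)⟩).nonempty_neighborSet_left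
      (by simpa using hba.symm)
  have hadj : G.Adj a t := hadj'
  exact ⟨t, hadj, fun htT => ht (Finset.mem_erase.2 ⟨hadj.ne.symm, htT⟩)⟩

lemma SimpleGraph.Walk.idxOf_lt_idxOf_of_mem_support_takeUntil [DecidableEq V] {u v a z : V}
    (p : G.Walk u v) (ha : a ∈ p.support) (hz : z ∈ (p.takeUntil a ha).support) (hza : z ≠ a) :
    p.support.idxOf z < p.support.idxOf a := by
  have h := Walk.length_takeUntil_lt_length hz hza
  rwa [Walk.takeUntil_takeUntil, Walk.length_takeUntil, Walk.length_takeUntil] at h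

lemma IsLongestPath.mem_support_of_adj_start {u v t : V} {p : G.Walk u v}
    (hp : IsLongestPath G p) (h : G.Adj t u) : t ∈ p.support := by
  by_contra ht
  have := hp.2 (Walk.cons h p) (hp.1.cons ht)
  simp at this

lemma SimpleGraph.Walk.IsPath.append_of_disjoint {u v w : V} {p : G.Walk u v} {q : G.Walk v w}
    (hp : p.IsPath) (hq : q.IsPath) (h : p.support.Disjoint q.support.tail) :
    (p.append q).IsPath := by
  rw [Walk.isPath_def, Walk.support_append]
  exact hp.support_nodup.append hq.support_nodup.tail h

lemma IsLongestPath.eq_of_isPath_of_meets_only_at_start {u v c : V} {p : G.Walk u v}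
    (hp : IsLongestPath G p) {r : G.Walk c u} (hr : r.IsPath)
    (hmeet : ∀ z ∈ r.support, z ∈ p.support → z = u) : c = u := by
  have hstart : u ∉ p.support.tail := by
    have := hp.1.support_nodup
    rw [← Walk.cons_tail_support] at this
    exact this.notMem
  have hdisj : r.support.Disjoint p.support.tail := fun z hzr hzp =>
    hstart (hmeet z hzr (List.mem_of_mem_tail hzp) ▸ hzp)
  have hlen := hp.2 _ (hr.append_of_disjoint hp.1 hdisj)
  rw [Walk.length_append] at hlen
  exact Walk.eq_of_length_eq_zero (p := r) (by omega)

lemma IsLongestPath.eq_start_of_first_common_vertex [DecidableEq V] {u v c d : V}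
    {p : G.Walk u v} (hp : IsLongestPath G p) {q : G.Walk c d} (hq : q.IsPath)
    (hu : u ∈ q.support)
    (hfirst : ∀ z ∈ q.support, z ∈ p.support → q.support.idxOf u ≤ q.support.idxOf z) :
    c = u := by
  refine hp.eq_of_isPath_of_meets_only_at_start (hq.takeUntil hu) fun z hzr hzp => ?_
  by_contra hzu
  have hlt := q.idxOf_lt_idxOf_of_mem_support_takeUntil hu hzr hzu
  have hle := hfirst z (q.support_takeUntil_subset_support hu hzr) hzp
  omega

/-- Let `G` be `(ℓ+1)`-connected and `P`, `Q` longest paths with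
`|V(P) ∩ V(Q)| = ℓ`.  If the first intersection vertex `a₁` along `P` coincides
with the first intersection vertex along `Q`, then the initial segments of `P`
and of `Q` before `a₁` are both nonempty, i.e. `a₁` is neither the starting
endpoint of `P` nor that of `Q`. -/
theorem first_intersection_not_common_endpoint {V : Type} [Fintype V] [DecidableEq V]
    (G : SimpleGraph V) (l : ℕ) (hG : KConnected G (l + 1))
    {u v c d a1 : V} (p : G.Walk u v) (q : G.Walk c d)
    (hp : IsLongestPath G p) (hq : IsLongestPath G q)
    (hcard : (p.support.toFinset ∩ q.support.toFinset).card = l)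
    (ha1 : a1 ∈ p.support ∧ a1 ∈ q.support)
    (hfirstP : ∀ z ∈ p.support, z ∈ q.support →
      p.support.idxOf a1 ≤ p.support.idxOf z)
    (hfirstQ : ∀ z ∈ q.support, z ∈ p.support →
      q.support.idxOf a1 ≤ q.support.idxOf z) :
    a1 ≠ u ∧ a1 ≠ c := by
  obtain ⟨hap, haq⟩ := ha1
  have hPQ : a1 = u → a1 = c := by
    rintro rfl; exact (hp.eq_start_of_first_common_vertex hq.1 haq hfirstQ).symm
  have hQP : a1 = c → a1 = u := by
    rintro rfl; exact (hq.eq_start_of_first_common_vertex hp.1 hap hfirstP).symm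
  have hcommon : ¬(a1 = u ∧ a1 = c) := by
    rintro ⟨rfl, rfl⟩
    obtain ⟨t, hadj, ht⟩ := hG.exists_adj_notMem (a := a1) (hcard.le.trans l.le_succ)
      (by simp)
    exact ht (by simp [hp.mem_support_of_adj_start hadj.symm,
      hq.mem_support_of_adj_start hadj.symm])
  exact ⟨fun h => hcommon ⟨h, hPQ h⟩, fun h => hcommon ⟨hQP h, h⟩⟩
end

section
/- There exists a finite simple graph G on 11 vertices with two longest paths P and Q of length 9 such that V(P) ≠ V(Q), |V(P) ∩ V(Q)| = 9, and the complement of V(P) ∩ V(Q) in G is connected (so V(P) ∩ V(Q) is not a separator). -/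
open SimpleGraph

/-!
The paths `6 5 3 9 4 1 8 10 0 7` and `6 5 2 4 1 8 3 9 0 7` each miss exactly one vertex
(`2` and `10` respectively), and the graph has no Hamiltonian path, as an exhaustive
depth-first search confirms; so both are longest paths. They share nine vertices, and the
remaining two, `2` and `10`, are adjacent, so deleting the intersection leaves an edge.
-/

namespace SimpleGraph

variable {V : Type*} [DecidableEq V]

/-- Depth-first search for a path of length `n` from `v` whose vertices after `v` avoid
`visited`, reading the neighbours of each vertex off `nbrs`. -/
def dfsPath (nbrs : V → List V) : List V → V → ℕ → Bool
  | _, _, 0 => true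
  | visited, v, n + 1 =>
    (nbrs v).any fun w => decide (w ∉ visited) && dfsPath nbrs (w :: visited) w n

variable {G : SimpleGraph V} {nbrs : V → List V}

theorem dfsPath_eq_true_of_isPath (hnbrs : ∀ v w, G.Adj v w → w ∈ nbrs v) {v t : V}
    (q : G.Walk v t) (hq : q.IsPath) (visited : List V) (hvis : q.support.tail.Disjoint visited) :
    dfsPath nbrs visited v q.length = true := by
  induction q generalizing visited with
  | nil => rfl
  | @cons v w t hadj q ih =>
    rw [Walk.support_cons, List.tail_cons] at hvis
    have hw : w ∉ visited := hvis q.start_mem_support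
    have hw_tail : w ∉ q.support.tail := by
      have hnodup := hq.of_cons.support_nodup
      rw [← q.cons_tail_support] at hnodup
      exact (List.nodup_cons.mp hnodup).1
    have hrest : q.support.tail.Disjoint (w :: visited) := by
      rw [List.disjoint_cons_right]
      exact ⟨hw_tail, fun x hx => hvis (List.mem_of_mem_tail hx)⟩
    simp only [Walk.length_cons, dfsPath, List.any_eq_true, Bool.and_eq_true, decide_eq_true_eq]
    exact ⟨w, hnbrs v w hadj, hw, ih hq.of_cons _ hrest⟩

theorem Walk.IsPath.length_lt_of_dfsPath_eq_false (hnbrs : ∀ v w, G.Adj v w → w ∈ nbrs v)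
    {n : ℕ} (hn : ∀ a, dfsPath nbrs [a] a n = false) {u v : V} {q : G.Walk u v}
    (hq : q.IsPath) :
    q.length < n := by
  by_contra! hle
  have hlen : (q.take n).length = n := by rw [Walk.take_length, min_eq_left hle]
  have hnodup := (hq.take n).support_nodup
  rw [← Walk.cons_tail_support, List.nodup_cons] at hnodup
  have hvis : (q.take n).support.tail.Disjoint [u] := by
    simpa [List.disjoint_singleton] using hnodup.1
  have := dfsPath_eq_true_of_isPath hnbrs _ (hq.take n) [u] hvis
  rw [hlen, hn u] at this
  exact Bool.false_ne_true this

end SimpleGraph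

namespace ElevenVertex

def nbrs : Fin 11 → List (Fin 11)
  | 0 => [4, 7, 8, 9, 10]
  | 1 => [4, 8]
  | 2 => [4, 5, 10]
  | 3 => [5, 8, 9]
  | 4 => [0, 1, 2, 9]
  | 5 => [2, 3, 6]
  | 6 => [5]
  | 7 => [0]
  | 8 => [0, 1, 3, 10]
  | 9 => [0, 3, 4]
  | 10 => [0, 2, 8]

def graph : SimpleGraph (Fin 11) where
  Adj x y := y ∈ nbrs x
  symm := ⟨fun x y => (by decide : ∀ x y : Fin 11, y ∈ nbrs x → x ∈ nbrs y) x y⟩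
  loopless := ⟨fun x => (by decide : ∀ x : Fin 11, x ∉ nbrs x) x⟩

instance : DecidableRel graph.Adj := fun a b => inferInstanceAs (Decidable (b ∈ nbrs a))

theorem dfsPath_singleton_ten_eq_false : ∀ a, dfsPath nbrs [a] a 10 = false := by decide

theorem isLongestPath_of_length_eq_nine {u v : Fin 11} {p : graph.Walk u v} (hp : p.IsPath)
    (hlen : p.length = 9) : IsLongestPath graph p :=
  ⟨hp, fun _ _ _ hq => hlen ▸ Nat.le_of_lt_succ
    (hq.length_lt_of_dfsPath_eq_false (fun _ _ h => h) dfsPath_singleton_ten_eq_false)⟩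

def pathP : graph.Walk 6 7 :=
  .cons (v := 5) (by decide) <| .cons (v := 3) (by decide) <| .cons (v := 9) (by decide) <|
  .cons (v := 4) (by decide) <| .cons (v := 1) (by decide) <| .cons (v := 8) (by decide) <|
  .cons (v := 10) (by decide) <| .cons (v := 0) (by decide) <| .cons (by decide) .nil

def pathQ : graph.Walk 6 7 :=
  .cons (v := 5) (by decide) <| .cons (v := 2) (by decide) <| .cons (v := 4) (by decide) <|
  .cons (v := 1) (by decide) <| .cons (v := 8) (by decide) <| .cons (v := 3) (by decide) <|
  .cons (v := 9) (by decide) <| .cons (v := 0) (by decide) <| .cons (by decide) .nil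

theorem support_pathP : pathP.support = [6, 5, 3, 9, 4, 1, 8, 10, 0, 7] := rfl
theorem support_pathQ : pathQ.support = [6, 5, 2, 4, 1, 8, 3, 9, 0, 7] := rfl

theorem isPath_pathP : pathP.IsPath := by rw [Walk.isPath_def, support_pathP]; decide
theorem isPath_pathQ : pathQ.IsPath := by rw [Walk.isPath_def, support_pathQ]; decide

theorem not_mem_both_supports_iff (x : Fin 11) :
    ¬ (x ∈ pathP.support ∧ x ∈ pathQ.support) ↔ x ∈ ({2, 10} : Set (Fin 11)) := by
  rw [support_pathP, support_pathQ]
  fin_cases x <;> simp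

end ElevenVertex

open ElevenVertex in
/-- There is a simple graph on `11` vertices with two longest paths `P`, `Q` of
length `9` such that `V(P) ≠ V(Q)`, `|V(P) ∩ V(Q)| = 9`, and the complement of
`V(P) ∩ V(Q)` is connected — so `V(P) ∩ V(Q)` is not a separator. -/
theorem eleven_vertex_counterexample :
    ∃ (G : SimpleGraph (Fin 11)) (u v c d : Fin 11)
      (p : G.Walk u v) (q : G.Walk c d),
      IsLongestPath G p ∧ IsLongestPath G q ∧
      p.length = 9 ∧ q.length = 9 ∧
      {x | x ∈ p.support} ≠ {x | x ∈ q.support} ∧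
      (p.support.toFinset ∩ q.support.toFinset).card = 9 ∧
      (G.induce {x | ¬ (x ∈ p.support ∧ x ∈ q.support)}).Connected := by
  refine ⟨graph, 6, 7, 6, 7, pathP, pathQ, isLongestPath_of_length_eq_nine isPath_pathP rfl,
    isLongestPath_of_length_eq_nine isPath_pathQ rfl, rfl, rfl, ?_, ?_, ?_⟩
  · intro h
    have h2 := congrArg ((2 : Fin 11) ∈ ·) h
    simp [support_pathP, support_pathQ] at h2
  · rw [support_pathP, support_pathQ]; decide
  · rw [Set.ext not_mem_both_supports_iff]
    exact induce_pair_connected_of_adj (by decide)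
end
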